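/- Let f : ℝ → ℝ be smooth and let F_f : ℝ⟦y⟧ → ℝ⟦y⟧ be its Taylor extension, F_f(T) := Σ_{n≥0} (f^{(n)}(T₀)/n!) · (T − T₀)^n with T₀ the constant coefficient of T. Then for every T ∈ ℝ⟦y⟧ and every S ∈ ℝ⟦y⟧ with zero constant coefficient, F_f(T + S) = Σ_{n≥0} (S^n/n!) · F_{f^{(n)}}(T), the right-hand side being a well-defined formal power series since S^n has order at least n. -/

import Mathlib

/-!
Write `T₀` for the constant coefficient of `T` and `A = T - T₀`. Since `T + S` has constant
coefficient `T₀` and `A`, `S` have zero constant coefficient, the `N`-th coefficient of either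
side only sees the terms of total degree `≤ N` in `A` and `S`. There the left side is
`∑ₘ f⁽ᵐ⁾(T₀)/m! (S + A)ᵐ`; expanding binomially and regrouping by the power of `S` gives
`∑ₙ Sⁿ/n! ∑ⱼ f⁽ⁿ⁺ʲ⁾(T₀)/j! Aʲ`, and the inner sum is the Taylor extension of `f⁽ⁿ⁾` at `T`.
-/

open scoped Nat

noncomputable def taylorExt (f : ℝ → ℝ) (T : PowerSeries ℝ) : PowerSeries ℝ :=
  PowerSeries.mk fun N : ℕ =>
    ∑' n : ℕ, (iteratedDeriv n f (PowerSeries.constantCoeff T) / n !) *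
      PowerSeries.coeff N
        ((T - PowerSeries.C (PowerSeries.constantCoeff T)) ^ n)

open PowerSeries Finset

theorem iteratedDeriv_iteratedDeriv {𝕜 F : Type*} [NontriviallyNormedField 𝕜]
    [NormedAddCommGroup F] [NormedSpace 𝕜 F] (f : 𝕜 → F) (n j : ℕ) :
    iteratedDeriv j (iteratedDeriv n f) = iteratedDeriv (n + j) f := by
  simp only [iteratedDeriv_eq_iterate, ← Function.iterate_add_apply, add_comm]

theorem sum_range_div_factorial_smul_add_pow {K R : Type*} [Field K] [CharZero K] [CommRing R]
    [Algebra K R] (d : ℕ → K) (s a : R) (N : ℕ) :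
    ∑ m ∈ range N, (d m / m !) • (s + a) ^ m =
      ∑ n ∈ range N, ∑ j ∈ range (N - n), (d (n + j) / (n ! * j !)) • (s ^ n * a ^ j) := by
  rw [← sum_range_diag_flip]
  refine sum_congr rfl fun m _ => ?_
  rw [add_pow, smul_sum]
  refine sum_congr rfl fun k hk => ?_
  have hkm : k ≤ m := Nat.lt_succ_iff.1 (mem_range.1 hk)
  rw [Nat.add_sub_cancel' hkm, ← nsmul_eq_mul', ← Nat.cast_smul_eq_nsmul K, smul_smul,
    Nat.cast_choose K hkm]
  congr 1
  have : (m ! : K) ≠ 0 := Nat.cast_ne_zero.2 m.factorial_ne_zero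
  field_simp

section

variable {R : Type*} [CommRing R]

theorem X_pow_dvd_pow_of_constantCoeff_eq_zero {a : R⟦X⟧} (ha : constantCoeff a = 0) (n : ℕ) :
    (X : R⟦X⟧) ^ n ∣ a ^ n :=
  pow_dvd_pow_of_dvd (X_dvd_iff.2 ha) n

theorem coeff_pow_of_lt {a : R⟦X⟧} (ha : constantCoeff a = 0) {N n : ℕ} (h : N < n) :
    coeff N (a ^ n) = 0 :=
  X_pow_dvd_iff.1 (X_pow_dvd_pow_of_constantCoeff_eq_zero ha n) N h

theorem coeff_pow_mul_pow_of_lt {a b : R⟦X⟧} (ha : constantCoeff a = 0)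
    (hb : constantCoeff b = 0) {N n j : ℕ} (h : N < n + j) :
    coeff N (a ^ n * b ^ j) = 0 := by
  refine X_pow_dvd_iff.1 ?_ N h
  rw [pow_add]
  exact mul_dvd_mul (X_pow_dvd_pow_of_constantCoeff_eq_zero ha n)
    (X_pow_dvd_pow_of_constantCoeff_eq_zero hb j)

theorem coeff_mul_congr_right {N : ℕ} (P : R⟦X⟧) {F G : R⟦X⟧}
    (h : ∀ q ≤ N, coeff q F = coeff q G) : coeff N (P * F) = coeff N (P * G) := by
  simp only [coeff_mul]
  exact sum_congr rfl fun p hp => by rw [h p.2 (HasAntidiagonal.antidiagonal.snd_le hp)]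

end

theorem coeff_taylorExt (g : ℝ → ℝ) (T : ℝ⟦X⟧) {q M : ℕ} (hq : q ≤ M) :
    coeff q (taylorExt g T) = coeff q (∑ j ∈ range (M + 1),
      (iteratedDeriv j g (constantCoeff T) / j !) • (T - C (constantCoeff T)) ^ j) := by
  simp only [taylorExt, coeff_mk, map_sum, coeff_smul, smul_eq_mul]
  refine tsum_eq_sum fun j hj => ?_
  rw [coeff_pow_of_lt (by simp) (by simp only [mem_range, not_lt] at hj; omega), mul_zero]

theorem coeff_pow_mul_taylorExt (g : ℝ → ℝ) (T : ℝ⟦X⟧) {S : ℝ⟦X⟧} (hS : constantCoeff S = 0)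
    (n N : ℕ) :
    coeff N (S ^ n * taylorExt g T) = ∑ j ∈ range (N + 1 - n),
      (iteratedDeriv j g (constantCoeff T) / j !) *
        coeff N (S ^ n * (T - C (constantCoeff T)) ^ j) := by
  rw [coeff_mul_congr_right _ fun q hq => coeff_taylorExt g T hq, mul_sum, map_sum]
  simp only [mul_smul_comm, coeff_smul, smul_eq_mul]
  refine (sum_subset (range_subset_range.2 (Nat.sub_le _ _)) fun j _ hj => ?_).symm
  rw [coeff_pow_mul_pow_of_lt hS (by simp) (by simp only [mem_range, not_lt] at hj; omega), mul_zero]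

theorem taylorExt_translation_general (f : ℝ → ℝ)
    (T S : PowerSeries ℝ) (hS : PowerSeries.constantCoeff S = 0) :
    taylorExt f (T + S) =
      PowerSeries.mk fun N : ℕ =>
        ∑' n : ℕ,
          PowerSeries.coeff N (S ^ n * taylorExt (iteratedDeriv n f) T) / n ! := by
  ext N
  set T₀ := constantCoeff T
  set A := T - C T₀
  have hTS : T + S - C (constantCoeff (T + S)) = S + A := by
    simp only [map_add, hS, add_zero, A, T₀]; ring
  calc coeff N (taylorExt f (T + S))
      = coeff N (∑ m ∈ range (N + 1), (iteratedDeriv m f T₀ / m !) • (S + A) ^ m) := by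
        rw [coeff_taylorExt f (T + S) le_rfl, hTS, map_add, hS, add_zero]
    _ = coeff N (∑ n ∈ range (N + 1), ∑ j ∈ range (N + 1 - n),
          (iteratedDeriv (n + j) f T₀ / (n ! * j !)) • (S ^ n * A ^ j)) := by
        rw [sum_range_div_factorial_smul_add_pow]
    _ = ∑ n ∈ range (N + 1), coeff N (S ^ n * taylorExt (iteratedDeriv n f) T) / n ! := by
        simp only [coeff_pow_mul_taylorExt _ T hS, iteratedDeriv_iteratedDeriv, map_sum,
          coeff_smul, smul_eq_mul, sum_div]
        refine sum_congr rfl fun n _ => sum_congr rfl fun j _ => by ring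
    _ = _ := by
        rw [coeff_mk, tsum_eq_sum (s := range (N + 1)) fun n hn => by
          rw [coeff_pow_mul_taylorExt _ T hS, Nat.sub_eq_zero_of_le (by simpa using hn),
            range_zero, sum_empty, zero_div]]

/-- **Formal translation formula.** For smooth `f : ℝ → ℝ`, `T ∈ ℝ⟦y⟧` and
`S ∈ ℝ⟦y⟧` with zero constant coefficient,
`F_f(T + S) = ∑_{n ≥ 0} (Sⁿ/n!) · F_{f^{(n)}}(T)`, the right-hand side summed
coefficientwise (the `tsum` below has only finitely many nonzero terms for
each fixed coefficient, since `Sⁿ` has order at least `n`). -/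
theorem taylorExt_translation (f : ℝ → ℝ)
    (hf : ContDiff ℝ ((⊤ : ℕ∞) : WithTop ℕ∞) f)
    (T S : PowerSeries ℝ) (hS : PowerSeries.constantCoeff S = 0) :
    taylorExt f (T + S) =
      PowerSeries.mk fun N : ℕ =>
        ∑' n : ℕ,
          PowerSeries.coeff N (S ^ n * taylorExt (iteratedDeriv n f) T) / n ! :=
  taylorExt_translation_general f T S hS
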